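/- For integers n ≥ 2 and m ≥ 2, let P_n and P_m be paths with n and m vertices respectively. Then AT(P_n +_Q P_m) = 2 if n = 2 and m = 2, and AT(P_n +_Q P_m) = 3 otherwise. -/

import Mathlib

/-!
Upper bounds. List the vertices of `P_n +_Q P_m` column by column (the vertices and edge
midpoints of `P_n` from left to right, each column through the layers `0, …, m - 1`). Every
vertex then has at most two later neighbours, so orienting each edge forwards gives an acyclic
orientation, hence an Alon–Tarsi one, of maximum out-degree `2`. For `n = m = 2` the graph is a
6-cycle; its cyclic orientation has out-degree `1` and is Alon–Tarsi because the cycle is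
bipartite, and in a bipartite digraph every Eulerian subdigraph has an even number of arcs.

Lower bounds. An orientation with out-degrees at most `1` orients every cycle cyclically, so no
arc leaves a cycle. For `n ≥ 3` the two ends of a vertical edge over the middle vertex of the
first two edges of `P_n` each lie on a triangle. For `n = 2` and `m ≥ 3` the vertices `(0,1)` and
`(1,1)` lie on the 8-cycle around the layers `0, 1, 2`, which forces both edges at `(e,1)` to
leave it.
-/

open scoped Classical

/-- The outdegree of a vertex `v` in a finite set of arcs `A`. -/
noncomputable def arcOutDeg {V : Type*} (A : Finset (V × V)) (v : V) : ℕ :=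
  (A.filter fun a => a.1 = v).card

/-- The indegree of a vertex `v` in a finite set of arcs `A`. -/
noncomputable def arcInDeg {V : Type*} (A : Finset (V × V)) (v : V) : ℕ :=
  (A.filter fun a => a.2 = v).card

/-- `A` is an orientation of the simple graph `G`: every arc of `A` joins adjacent
vertices, and every edge of `G` receives exactly one of its two possible directions. -/
def IsOrientation {V : Type*} (G : SimpleGraph V) (A : Finset (V × V)) : Prop :=
  (∀ a ∈ A, G.Adj a.1 a.2) ∧ ∀ u v : V, G.Adj u v → ((u, v) ∈ A ↔ (v, u) ∉ A)

/-- A set of arcs is Eulerian if at every vertex the indegree equals the outdegree. -/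
def IsEulerianSub {V : Type*} (B : Finset (V × V)) : Prop :=
  ∀ v : V, arcInDeg B v = arcOutDeg B v

/-- An orientation (given by its arc set `A`) is an Alon–Tarsi orientation if the number
of its even Eulerian sub-digraphs differs from the number of its odd Eulerian
sub-digraphs. -/
def IsATOrientation {V : Type*} (A : Finset (V × V)) : Prop :=
  (A.powerset.filter fun B => IsEulerianSub B ∧ Even B.card).card ≠
    (A.powerset.filter fun B => IsEulerianSub B ∧ ¬ Even B.card).card

/-- The Alon–Tarsi number of `G`: the least `k` such that `G` has an Alon–Tarsi
orientation with maximum outdegree at most `k - 1` (i.e. `< k`). -/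
noncomputable def alonTarsiNumber {V : Type*} (G : SimpleGraph V) : ℕ :=
  sInf {k : ℕ | ∃ A : Finset (V × V),
    IsOrientation G A ∧ IsATOrientation A ∧ ∀ v : V, arcOutDeg A v < k}

/-- A graph is `k`-degenerate if every nonempty (induced) subgraph has a vertex of
degree at most `k`. -/
def Degenerate {V : Type*} (k : ℕ) (G : SimpleGraph V) : Prop :=
  ∀ s : Finset V, s.Nonempty → ∃ v ∈ s, (s.filter fun u => G.Adj v u).card ≤ k

/-- The subdivision graph `S(G)`: each edge `uv` of `G` is replaced by a path `u-e-v`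
through the new vertex `e` corresponding to `uv`. -/
def subdivisionGraph {V : Type*} (G : SimpleGraph V) : SimpleGraph (V ⊕ ↥G.edgeSet) :=
  SimpleGraph.fromRel fun a b =>
    match a, b with
    | Sum.inl u, Sum.inr e => u ∈ (e : Sym2 V)
    | _, _ => False

/-- The graph `R(G)`: `G` together with, for each edge `uv`, a new vertex joined to
`u` and `v`. -/
def rGraph {V : Type*} (G : SimpleGraph V) : SimpleGraph (V ⊕ ↥G.edgeSet) :=
  SimpleGraph.fromRel fun a b =>
    match a, b with
    | Sum.inl u, Sum.inl v => G.Adj u v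
    | Sum.inl u, Sum.inr e => u ∈ (e : Sym2 V)
    | _, _ => False

/-- The graph `Q(G)`: new vertices joined to the endpoints of their edges, and two new
vertices joined iff the corresponding edges of `G` share an endpoint; original
vertices are pairwise nonadjacent. -/
def qGraph {V : Type*} (G : SimpleGraph V) : SimpleGraph (V ⊕ ↥G.edgeSet) :=
  SimpleGraph.fromRel fun a b =>
    match a, b with
    | Sum.inl u, Sum.inr e => u ∈ (e : Sym2 V)
    | Sum.inr e, Sum.inr f => e ≠ f ∧ ∃ u : V, u ∈ (e : Sym2 V) ∧ u ∈ (f : Sym2 V)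
    | _, _ => False

/-- The total graph `T(G)`. -/
def tGraph {V : Type*} (G : SimpleGraph V) : SimpleGraph (V ⊕ ↥G.edgeSet) :=
  SimpleGraph.fromRel fun a b =>
    match a, b with
    | Sum.inl u, Sum.inl v => G.Adj u v
    | Sum.inl u, Sum.inr e => u ∈ (e : Sym2 V)
    | Sum.inr e, Sum.inr f => e ≠ f ∧ ∃ u : V, u ∈ (e : Sym2 V) ∧ u ∈ (f : Sym2 V)
    | _, _ => False

/-- The `F`-sum construction: given a graph `K` on `V ⊕ E` (playing the role of `F(G)`,
whose "original" vertices are those of the form `Sum.inl u`) and a graph `H` on `W`,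
two vertices `(u₁, u₂)` and `(v₁, v₂)` are adjacent iff either `u₁ = v₁` is an original
vertex and `u₂v₂ ∈ E(H)`, or `u₂ = v₂` and `u₁v₁ ∈ E(K)`. -/
def fSum {V E W : Type*} (K : SimpleGraph (V ⊕ E)) (H : SimpleGraph W) :
    SimpleGraph ((V ⊕ E) × W) :=
  SimpleGraph.fromRel fun a b =>
    (a.1 = b.1 ∧ (∃ u : V, a.1 = Sum.inl u) ∧ H.Adj a.2 b.2) ∨
      (a.2 = b.2 ∧ K.Adj a.1 b.1)

/-- The `S`-sum `G +_S H`. -/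
def sSum {V W : Type*} (G : SimpleGraph V) (H : SimpleGraph W) :
    SimpleGraph ((V ⊕ ↥G.edgeSet) × W) :=
  fSum (subdivisionGraph G) H

/-- The `R`-sum `G +_R H`. -/
def rSum {V W : Type*} (G : SimpleGraph V) (H : SimpleGraph W) :
    SimpleGraph ((V ⊕ ↥G.edgeSet) × W) :=
  fSum (rGraph G) H

/-- The `Q`-sum `G +_Q H`. -/
def qSum {V W : Type*} (G : SimpleGraph V) (H : SimpleGraph W) :
    SimpleGraph ((V ⊕ ↥G.edgeSet) × W) :=
  fSum (qGraph G) H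

/-- The `T`-sum `G +_T H`. -/
def tSum {V W : Type*} (G : SimpleGraph V) (H : SimpleGraph W) :
    SimpleGraph ((V ⊕ ↥G.edgeSet) × W) :=
  fSum (tGraph G) H

/-- The star graph `S_n = K_{1,n}`. -/
def starGraph (n : ℕ) : SimpleGraph (Fin 1 ⊕ Fin n) :=
  completeBipartiteGraph (Fin 1) (Fin n)

namespace IsOrientation

variable {V : Type*} {G : SimpleGraph V} {A : Finset (V × V)}

lemma mem_or_mem (hA : IsOrientation G A) {u v : V} (huv : G.Adj u v) :
    (u, v) ∈ A ∨ (v, u) ∈ A := by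
  by_cases hvu : (v, u) ∈ A
  · exact Or.inr hvu
  · exact Or.inl ((hA.2 u v huv).2 hvu)

lemma exists_one_le_arcOutDeg (hA : IsOrientation G A) {u v : V} (huv : G.Adj u v) :
    ∃ w, 1 ≤ arcOutDeg A w := by
  rcases hA.mem_or_mem huv with h | h
  · exact ⟨u, Finset.card_pos.2 ⟨_, Finset.mem_filter.2 ⟨h, rfl⟩⟩⟩
  · exact ⟨v, Finset.card_pos.2 ⟨_, Finset.mem_filter.2 ⟨h, rfl⟩⟩⟩

end IsOrientation

section OutDegree

variable {V : Type*} {G : SimpleGraph V} {A : Finset (V × V)}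

lemma two_le_arcOutDeg {u x y : V} (hx : (u, x) ∈ A) (hy : (u, y) ∈ A) (hxy : x ≠ y) :
    2 ≤ arcOutDeg A u := by
  have hsub : ({(u, x), (u, y)} : Finset (V × V)) ⊆ A.filter fun a => a.1 = u := by
    simp [Finset.insert_subset_iff, hx, hy]
  simpa [arcOutDeg, Finset.card_pair, hxy] using Finset.card_le_card hsub

lemma IsOrientation.mem_of_arcOutDeg_lt_two (hA : IsOrientation G A)
    (hd : ∀ v, arcOutDeg A v < 2) {u x y : V} (hx : (u, x) ∈ A) (huy : G.Adj u y)
    (hyx : y ≠ x) : (y, u) ∈ A :=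
  (hA.mem_or_mem huy).resolve_left fun hy =>
    (two_le_arcOutDeg hx hy hyx.symm).not_gt (hd u)

/-- Out-degrees at most one orient every cycle cyclically, so no arc leaves a cycle. -/
lemma IsOrientation.eq_or_eq_of_mem_of_cycle (hA : IsOrientation G A)
    (hd : ∀ v, arcOutDeg A v < 2) (c : ℕ → V) (k : ℕ)
    (hadj : ∀ i ≤ k, G.Adj (c i) (c (i + 1))) (hback : ∀ i < k, c (i + 2) ≠ c i)
    (hclosed : c (k + 1) = c 0) {d : V} (hout : (c 0, d) ∈ A) : d = c 1 ∨ d = c k := by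
  by_contra! hne
  have hrev : ∀ i ≤ k, (c (i + 1), c i) ∈ A := by
    intro i hi
    induction i with
    | zero => exact hA.mem_of_arcOutDeg_lt_two hd hout (hadj 0 hi) hne.1.symm
    | succ i ih =>
      exact hA.mem_of_arcOutDeg_lt_two hd (ih (by omega)) (hadj (i + 1) hi) (hback i (by omega))
  have hlast := hrev k le_rfl
  rw [hclosed] at hlast
  exact (two_le_arcOutDeg hout hlast hne.2).not_gt (hd _)

end OutDegree

section AlonTarsi

variable {V : Type*}

lemma alonTarsiNumber_eq_succ {G : SimpleGraph V} {A : Finset (V × V)} {k : ℕ}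
    (hA : IsOrientation G A) (hAT : IsATOrientation A) (hout : ∀ v, arcOutDeg A v ≤ k)
    (hmin : ∀ B, IsOrientation G B → IsATOrientation B → ∃ v, k ≤ arcOutDeg B v) :
    alonTarsiNumber G = k + 1 := by
  have hmem : k + 1 ∈ {k : ℕ | ∃ A : Finset (V × V),
      IsOrientation G A ∧ IsATOrientation A ∧ ∀ v : V, arcOutDeg A v < k} :=
    ⟨A, hA, hAT, fun v => Nat.lt_succ_of_le (hout v)⟩
  refine le_antisymm (Nat.sInf_le hmem) (le_csInf ⟨_, hmem⟩ ?_)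
  rintro j ⟨B, hB, hBAT, hj⟩
  obtain ⟨v, hv⟩ := hmin B hB hBAT
  exact Nat.succ_le_of_lt (hv.trans_lt (hj v))

lemma isATOrientation_of_even {A : Finset (V × V)}
    (h : ∀ B ⊆ A, IsEulerianSub B → Even B.card) : IsATOrientation A := by
  have hodd : (A.powerset.filter fun B => IsEulerianSub B ∧ ¬ Even B.card) = ∅ :=
    Finset.filter_eq_empty_iff.2 fun B hB hB' => hB'.2 (h B (Finset.mem_powerset.1 hB) hB'.1)
  have hempty : (∅ : Finset (V × V)) ∈
      A.powerset.filter fun B => IsEulerianSub B ∧ Even B.card :=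
    Finset.mem_filter.2 ⟨Finset.empty_mem_powerset A, fun v => by simp [arcInDeg, arcOutDeg],
      ⟨0, rfl⟩⟩
  rw [IsATOrientation, hodd, Finset.card_empty]
  exact Finset.card_ne_zero_of_mem hempty

/-- In an Eulerian arc set whose arcs all cross a bipartition, the arcs leaving one side
are as many as those entering it. -/
lemma IsEulerianSub.even_card [Fintype V] {B : Finset (V × V)} (hB : IsEulerianSub B)
    (s : V → Prop) (hs : ∀ b ∈ B, s b.1 ↔ ¬ s b.2) : Even B.card := by
  have hout := Finset.sum_card_fiberwise_eq_card_filter B (Finset.univ.filter s) Prod.fst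
  have hin := Finset.sum_card_fiberwise_eq_card_filter B (Finset.univ.filter s) Prod.snd
  simp only [Finset.mem_filter, Finset.mem_univ, true_and] at hout hin
  have hbal : (B.filter fun b => s b.1).card = (B.filter fun b => ¬ s b.1).card := by
    have hcross : B.filter (fun b => ¬ s b.1) = B.filter (fun b => s b.2) :=
      Finset.filter_congr fun b hb => by rw [hs b hb, not_not]
    rw [← hout, hcross, ← hin]
    exact Finset.sum_congr rfl fun v _ => (hB v).symm
  rw [← Finset.card_filter_add_card_filter_not (fun b => s b.1), hbal]
  exact ⟨_, rfl⟩

/-- A head of maximal rank would need an outgoing arc. -/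
lemma IsEulerianSub.eq_empty_of_lt {α : Type*} [LinearOrder α] {B : Finset (V × V)}
    (hB : IsEulerianSub B) (r : V → α) (hr : ∀ b ∈ B, r b.1 < r b.2) : B = ∅ := by
  by_contra hne
  obtain ⟨b, hb, hmax⟩ := B.exists_max_image (fun a => r a.2) (Finset.nonempty_of_ne_empty hne)
  have hin : 1 ≤ arcInDeg B b.2 := Finset.card_pos.2 ⟨b, Finset.mem_filter.2 ⟨hb, rfl⟩⟩
  obtain ⟨c, hc⟩ := Finset.card_pos.1 (hin.trans_eq (hB b.2))
  rw [Finset.mem_filter] at hc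
  exact (hr c hc.1).not_ge (hc.2 ▸ hmax c hc.1)

end AlonTarsi

section RankOrientation

variable {V α : Type*} [Fintype V] [LinearOrder α]

noncomputable def rankOrientation (G : SimpleGraph V) (r : V → α) : Finset (V × V) :=
  Finset.univ.filter fun p => G.Adj p.1 p.2 ∧ r p.1 < r p.2

variable {G : SimpleGraph V} {r : V → α}

lemma isOrientation_rankOrientation (hr : Function.Injective r) :
    IsOrientation G (rankOrientation G r) := by
  refine ⟨fun a ha => (Finset.mem_filter.1 ha).2.1, fun u v huv => ?_⟩
  simp only [rankOrientation, Finset.mem_filter, Finset.mem_univ, true_and, huv, huv.symm]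
  exact ⟨fun h => h.not_gt, fun h => (not_lt.1 h).lt_of_ne (hr.ne huv.ne)⟩

lemma isATOrientation_rankOrientation : IsATOrientation (rankOrientation G r) :=
  isATOrientation_of_even fun B hBA hB => by
    rw [hB.eq_empty_of_lt r fun b hb => (Finset.mem_filter.1 (hBA hb)).2.2]
    exact ⟨0, rfl⟩

lemma arcOutDeg_rankOrientation_le (hr : Function.Injective r) {v : V} {S : Finset α}
    (hS : ∀ w, G.Adj v w → r v < r w → r w ∈ S) :
    arcOutDeg (rankOrientation G r) v ≤ S.card := by
  refine Finset.card_le_card_of_injOn (fun p => r p.2) (fun p hp => ?_) fun p hp q hq hpq => ?_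
  · simp only [rankOrientation, Finset.mem_coe, Finset.mem_filter, Finset.mem_univ,
      true_and] at hp
    obtain ⟨⟨hadj, hlt⟩, rfl⟩ := hp
    exact hS _ hadj hlt
  · simp only [Finset.mem_coe, Finset.mem_filter] at hp hq
    exact Prod.ext (hp.2.trans hq.2.symm) (hr hpq)

end RankOrientation

section CyclicOrientation

variable {V : Type*} [Fintype V] {k : ℕ}

noncomputable def cyclicOrientation (G : SimpleGraph V) (f : V → ZMod k) : Finset (V × V) :=
  Finset.univ.filter fun p => G.Adj p.1 p.2 ∧ f p.2 = f p.1 + 1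

variable {G : SimpleGraph V} {f : V → ZMod k}

lemma isOrientation_cyclicOrientation (hk : 2 < k)
    (hf : ∀ x y, G.Adj x y → f y = f x + 1 ∨ f x = f y + 1) :
    IsOrientation G (cyclicOrientation G f) := by
  refine ⟨fun a ha => (Finset.mem_filter.1 ha).2.1, fun u v huv => ?_⟩
  simp only [cyclicOrientation, Finset.mem_filter, Finset.mem_univ, true_and, huv, huv.symm]
  have htwo : (2 : ZMod k) ≠ 0 := by
    rw [← Nat.cast_ofNat, Ne, ZMod.natCast_eq_zero_iff]
    exact fun h => (Nat.le_of_dvd two_pos h).not_gt hk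
  refine ⟨fun h h' => htwo ?_, fun h => (hf u v huv).resolve_right h⟩
  linear_combination -h - h'

lemma arcOutDeg_cyclicOrientation_le_one (hf : Function.Injective f) (v : V) :
    arcOutDeg (cyclicOrientation G f) v ≤ 1 := by
  refine Finset.card_le_one.2 fun p hp q hq => ?_
  simp only [cyclicOrientation, Finset.mem_filter, Finset.mem_univ, true_and] at hp hq
  exact Prod.ext (hp.2.trans hq.2.symm) (hf (hp.1.2.trans (hp.2 ▸ hq.2 ▸ hq.1.2.symm)))

lemma isATOrientation_cyclicOrientation (hk : 2 ∣ k) :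
    IsATOrientation (cyclicOrientation G f) := by
  refine isATOrientation_of_even fun B hBA hB =>
    hB.even_card (fun x => ZMod.castHom hk (ZMod 2) (f x) = 0) fun b hb => ?_
  have hsucc : f b.2 = f b.1 + 1 := (Finset.mem_filter.1 (hBA hb)).2.2
  rw [hsucc, map_add, map_one]
  generalize ZMod.castHom hk (ZMod 2) (f b.1) = a
  revert a
  decide

end CyclicOrientation

section QSum

variable {V W : Type*} {G : SimpleGraph V} {H : SimpleGraph W}

lemma fSum_adj {E : Type*} {K : SimpleGraph (V ⊕ E)} {x y : (V ⊕ E) × W} :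
    (fSum K H).Adj x y ↔
      (x.1 = y.1 ∧ (∃ u : V, x.1 = Sum.inl u) ∧ H.Adj x.2 y.2) ∨
        (x.2 = y.2 ∧ K.Adj x.1 y.1) := by
  rw [fSum, SimpleGraph.fromRel_adj]
  constructor
  · rintro ⟨-, (h | h) | ⟨h₁, ⟨u, hu⟩, h₃⟩ | ⟨h₁, h₂⟩⟩
    · exact Or.inl h
    · exact Or.inr h
    · exact Or.inl ⟨h₁.symm, ⟨u, h₁ ▸ hu⟩, h₃.symm⟩
    · exact Or.inr ⟨h₁.symm, h₂.symm⟩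
  · rintro (⟨h₁, h₂, h₃⟩ | ⟨h₁, h₂⟩)
    · exact ⟨fun he => H.irrefl (he ▸ h₃), Or.inl (Or.inl ⟨h₁, h₂, h₃⟩)⟩
    · exact ⟨fun he => K.irrefl (he ▸ h₂), Or.inl (Or.inr ⟨h₁, h₂⟩)⟩

@[simp]
lemma qGraph_adj_inl_inl {u v : V} : ¬ (qGraph G).Adj (Sum.inl u) (Sum.inl v) := by
  simp [qGraph]

@[simp]
lemma qGraph_adj_inl_inr {u : V} {e : G.edgeSet} :
    (qGraph G).Adj (Sum.inl u) (Sum.inr e) ↔ u ∈ (e : Sym2 V) := by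
  simp [qGraph]

@[simp]
lemma qGraph_adj_inr_inl {u : V} {e : G.edgeSet} :
    (qGraph G).Adj (Sum.inr e) (Sum.inl u) ↔ u ∈ (e : Sym2 V) := by
  simp [qGraph]

@[simp]
lemma qGraph_adj_inr_inr {e f : G.edgeSet} :
    (qGraph G).Adj (Sum.inr e) (Sum.inr f) ↔
      e ≠ f ∧ ∃ u : V, u ∈ (e : Sym2 V) ∧ u ∈ (f : Sym2 V) := by
  simp only [qGraph, SimpleGraph.fromRel_adj, ne_eq, Sum.inr.injEq]
  grind

lemma qSum_adj_vertical (u : V) {j j' : W} (h : H.Adj j j') :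
    (qSum G H).Adj (Sum.inl u, j) (Sum.inl u, j') :=
  fSum_adj.2 (Or.inl ⟨rfl, ⟨u, rfl⟩, h⟩)

lemma qSum_adj_spoke {u : V} {e : G.edgeSet} (hu : u ∈ (e : Sym2 V)) (j : W) :
    (qSum G H).Adj (Sum.inl u, j) (Sum.inr e, j) :=
  fSum_adj.2 (Or.inr ⟨rfl, qGraph_adj_inl_inr.2 hu⟩)

lemma qSum_adj_edges {e f : G.edgeSet} (hef : e ≠ f) {u : V} (he : u ∈ (e : Sym2 V))
    (hf : u ∈ (f : Sym2 V)) (j : W) : (qSum G H).Adj (Sum.inr e, j) (Sum.inr f, j) :=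
  fSum_adj.2 (Or.inr ⟨rfl, qGraph_adj_inr_inr.2 ⟨hef, u, he, hf⟩⟩)

end QSum

section PathGraph

open SimpleGraph

variable {n m : ℕ}

lemma exists_eq_of_mem_edgeSet_pathGraph {e : Sym2 (Fin n)}
    (he : e ∈ (pathGraph n).edgeSet) : ∃ a b : Fin n, a.val + 1 = b.val ∧ e = s(a, b) := by
  induction e with
  | _ x y =>
    rcases pathGraph_adj.1 ((mem_edgeSet _).1 he) with h | h
    · exact ⟨x, y, h, rfl⟩
    · exact ⟨y, x, h, Sym2.eq_swap⟩

/-- Twice the position along `P_n`, an edge sitting at its midpoint. -/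
def doubledPos : Fin n ⊕ (pathGraph n).edgeSet → ℕ
  | Sum.inl u => 2 * u.val
  | Sum.inr e => Sym2.lift ⟨fun a b : Fin n => a.val + b.val, fun _ _ => add_comm _ _⟩ e

lemma doubledPos_inr_of_mem {e : (pathGraph n).edgeSet} {u : Fin n}
    (hu : u ∈ (e : Sym2 (Fin n))) :
    doubledPos (Sum.inr e) = 2 * u.val + 1 ∨ doubledPos (Sum.inr e) + 1 = 2 * u.val := by
  obtain ⟨a, b, hab, he⟩ := exists_eq_of_mem_edgeSet_pathGraph e.2
  rw [he, Sym2.mem_iff] at hu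
  simp only [doubledPos, he, Sym2.lift_mk]
  rcases hu with rfl | rfl <;> omega

lemma doubledPos_inr_mod_two (e : (pathGraph n).edgeSet) : doubledPos (Sum.inr e) % 2 = 1 := by
  obtain ⟨a, b, hab, he⟩ := exists_eq_of_mem_edgeSet_pathGraph e.2
  simp only [doubledPos, he, Sym2.lift_mk]
  omega

lemma doubledPos_add_two_le (a : Fin n ⊕ (pathGraph n).edgeSet) : doubledPos a + 2 ≤ 2 * n := by
  rcases a with u | e
  · simp only [doubledPos]
    omega
  · obtain ⟨a, b, hab, he⟩ := exists_eq_of_mem_edgeSet_pathGraph e.2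
    simp only [doubledPos, he, Sym2.lift_mk]
    omega

lemma doubledPos_injective : Function.Injective (doubledPos (n := n)) := by
  rintro (u | e) (v | f) h
  · exact congrArg Sum.inl (Fin.ext (by simp only [doubledPos] at h; omega))
  · have := doubledPos_inr_mod_two f
    simp only [doubledPos] at h this
    omega
  · have := doubledPos_inr_mod_two e
    simp only [doubledPos] at h this
    omega
  · obtain ⟨a, b, hab, he⟩ := exists_eq_of_mem_edgeSet_pathGraph e.2
    obtain ⟨c, d, hcd, hf⟩ := exists_eq_of_mem_edgeSet_pathGraph f.2
    simp only [doubledPos, he, hf, Sym2.lift_mk] at h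
    have hac : a = c := Fin.ext (by omega)
    have hbd : b = d := Fin.ext (by omega)
    exact congrArg Sum.inr (Subtype.ext (by rw [he, hf, hac, hbd]))

/-- Adjacency in `P_n +_Q P_m` read off the coordinates `(doubledPos, layer)`: vertical edges
join two copies of a vertex of `P_n`, horizontal edges move by one half-step, or by one step
between consecutive edges. -/
lemma doubledPos_of_qSum_adj {x y : (Fin n ⊕ (pathGraph n).edgeSet) × Fin m}
    (h : (qSum (pathGraph n) (pathGraph m)).Adj x y) :
    (doubledPos x.1 = doubledPos y.1 ∧ doubledPos x.1 % 2 = 0 ∧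
        (x.2.val + 1 = y.2.val ∨ y.2.val + 1 = x.2.val)) ∨
      (x.2.val = y.2.val ∧
        (doubledPos y.1 = doubledPos x.1 + 1 ∨ doubledPos x.1 = doubledPos y.1 + 1 ∨
          doubledPos x.1 % 2 = 1 ∧
            (doubledPos y.1 = doubledPos x.1 + 2 ∨ doubledPos x.1 = doubledPos y.1 + 2))) := by
  obtain ⟨a, j⟩ := x
  obtain ⟨b, j'⟩ := y
  dsimp only
  rcases fSum_adj.1 h with ⟨rfl, ⟨u, rfl⟩, hj⟩ | ⟨hj, hab⟩
  · left
    simp only [doubledPos, true_and]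
    exact ⟨by omega, pathGraph_adj.1 hj⟩
  right
  refine ⟨congrArg Fin.val hj, ?_⟩
  rcases a with u | e <;> rcases b with v | f
  · exact absurd hab qGraph_adj_inl_inl
  · have := doubledPos_inr_of_mem (qGraph_adj_inl_inr.1 hab)
    simp only [doubledPos] at this ⊢
    omega
  · have := doubledPos_inr_of_mem (qGraph_adj_inr_inl.1 hab)
    simp only [doubledPos] at this ⊢
    omega
  · obtain ⟨hef, u, he, hf⟩ := qGraph_adj_inr_inr.1 hab
    have hne := doubledPos_injective.ne (Sum.inr_injective.ne hef)
    have := doubledPos_inr_of_mem he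
    have := doubledPos_inr_of_mem hf
    have := doubledPos_inr_mod_two e
    omega

end PathGraph

section UpperBounds

open SimpleGraph

variable {n m : ℕ}

def qSumRank (x : (Fin n ⊕ (pathGraph n).edgeSet) × Fin m) : ℕ ×ₗ ℕ :=
  toLex (doubledPos x.1, x.2.val)

lemma qSumRank_injective : Function.Injective (qSumRank (n := n) (m := m)) := by
  intro x y h
  simp only [qSumRank, toLex_inj, Prod.mk.injEq] at h
  exact Prod.ext (doubledPos_injective h.1) (Fin.ext h.2)

lemma arcOutDeg_rankOrientation_qSumRank_le (v : (Fin n ⊕ (pathGraph n).edgeSet) × Fin m) :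
    arcOutDeg (rankOrientation (qSum (pathGraph n) (pathGraph m)) qSumRank) v ≤ 2 := by
  refine (arcOutDeg_rankOrientation_le qSumRank_injective
    (S := {toLex (doubledPos v.1 + 1, v.2.val),
      if doubledPos v.1 % 2 = 0 then toLex (doubledPos v.1, v.2.val + 1)
      else toLex (doubledPos v.1 + 2, v.2.val)})
    fun w hvw hlt => ?_).trans Finset.card_le_two
  simp only [qSumRank, Prod.Lex.toLex_lt_toLex] at hlt
  have hadj := doubledPos_of_qSum_adj hvw
  split_ifs <;>
    simp only [Finset.mem_insert, Finset.mem_singleton, qSumRank, toLex_inj, Prod.mk.injEq] <;>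
    omega

/-- `P_2 +_Q P_2` is the 6-cycle `(0,0), (e,0), (1,0), (1,1), (e,1), (0,1)`, numbered in this
order. -/
def sixCycleIndex (x : (Fin 2 ⊕ (pathGraph 2).edgeSet) × Fin 2) : ℕ :=
  if x.2.val = 0 then doubledPos x.1 else 5 - doubledPos x.1

lemma sixCycleIndex_injective :
    Function.Injective fun x => (sixCycleIndex x : ZMod 6) := by
  intro x y h
  simp only [ZMod.natCast_eq_natCast_iff', sixCycleIndex] at h
  have hx := doubledPos_add_two_le x.1
  have hy := doubledPos_add_two_le y.1
  have hpos : doubledPos x.1 = doubledPos y.1 ∧ x.2.val = y.2.val := by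
    split_ifs at h <;> omega
  exact Prod.ext (doubledPos_injective hpos.1) (Fin.ext hpos.2)

lemma sixCycleIndex_adj {x y : (Fin 2 ⊕ (pathGraph 2).edgeSet) × Fin 2}
    (h : (qSum (pathGraph 2) (pathGraph 2)).Adj x y) :
    (sixCycleIndex y : ZMod 6) = sixCycleIndex x + 1 ∨
      (sixCycleIndex x : ZMod 6) = sixCycleIndex y + 1 := by
  have hsucc : ∀ a b : ℕ, b = (a + 1) % 6 → (b : ZMod 6) = a + 1 := fun a b hab => by
    rw [hab, ZMod.natCast_mod, Nat.cast_succ]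
  have hadj := doubledPos_of_qSum_adj h
  have hx := doubledPos_add_two_le x.1
  have hy := doubledPos_add_two_le y.1
  have := x.2.isLt
  have := y.2.isLt
  refine (?_ : sixCycleIndex y = (sixCycleIndex x + 1) % 6 ∨
    sixCycleIndex x = (sixCycleIndex y + 1) % 6).imp (hsucc _ _) (hsucc _ _)
  simp only [sixCycleIndex]
  split_ifs <;> omega

end UpperBounds

section LowerBounds

open SimpleGraph

variable {n m : ℕ} {B : Finset (((Fin n ⊕ (pathGraph n).edgeSet) × Fin m) ×
  ((Fin n ⊕ (pathGraph n).edgeSet) × Fin m))}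

def pathEdge (a : ℕ) (h : a + 1 < n) : (pathGraph n).edgeSet :=
  ⟨s(⟨a, by omega⟩, ⟨a + 1, h⟩), pathGraph_adj.2 (Or.inl rfl)⟩

lemma qSum_pathGraph_exists_two_le_arcOutDeg_of_three_le (hn : 3 ≤ n) (hm : 2 ≤ m)
    (hB : IsOrientation (qSum (pathGraph n) (pathGraph m)) B) : ∃ v, 2 ≤ arcOutDeg B v := by
  by_contra! hd
  set u : Fin n := ⟨1, by omega⟩
  set e₀ := pathEdge (n := n) 0 (by omega)
  set e₁ := pathEdge (n := n) 1 (by omega)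
  have hu₀ : u ∈ (e₀ : Sym2 (Fin n)) := Sym2.mem_mk_right _ _
  have hu₁ : u ∈ (e₁ : Sym2 (Fin n)) := Sym2.mem_mk_left _ _
  have he : e₀ ≠ e₁ := fun h => by simpa [e₀, e₁, pathEdge] using congrArg Subtype.val h
  have hleave : ∀ j j' : Fin m, ((Sum.inl u, j), (Sum.inl u, j')) ∉ B := by
    intro j j' h
    let c : ℕ → (Fin n ⊕ (pathGraph n).edgeSet) × Fin m := fun i =>
      [(Sum.inl u, j), (Sum.inr e₀, j), (Sum.inr e₁, j), (Sum.inl u, j)].getD i (Sum.inl u, j)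
    refine (hB.eq_or_eq_of_mem_of_cycle hd c 2 (fun i hi => ?_) (fun i hi => ?_) rfl h).elim
      (by simp [c]) (by simp [c])
    · interval_cases i
      exacts [qSum_adj_spoke hu₀ j, qSum_adj_edges he hu₀ hu₁ j, (qSum_adj_spoke hu₁ j).symm]
    · interval_cases i <;> simp [c]
  rcases hB.mem_or_mem (qSum_adj_vertical u (H := pathGraph m) (j := ⟨0, by omega⟩)
    (j' := ⟨1, by omega⟩) (pathGraph_adj.2 (Or.inl rfl))) with h | h
  exacts [hleave _ _ h, hleave _ _ h]

lemma qSum_pathGraph_two_exists_two_le_arcOutDeg (hm : 3 ≤ m)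
    {B : Finset (((Fin 2 ⊕ (pathGraph 2).edgeSet) × Fin m) ×
      ((Fin 2 ⊕ (pathGraph 2).edgeSet) × Fin m))}
    (hB : IsOrientation (qSum (pathGraph 2) (pathGraph m)) B) : ∃ v, 2 ≤ arcOutDeg B v := by
  by_contra! hd
  set e := pathEdge (n := 2) 0 (by omega)
  have hmem : ∀ i : Fin 2, i ∈ (e : Sym2 (Fin 2)) := by
    intro i
    fin_cases i
    exacts [Sym2.mem_mk_left _ _, Sym2.mem_mk_right _ _]
  set j₀ : Fin m := ⟨0, by omega⟩
  set j₁ : Fin m := ⟨1, by omega⟩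
  set j₂ : Fin m := ⟨2, by omega⟩
  have h₀₁ : (pathGraph m).Adj j₀ j₁ := pathGraph_adj.2 (Or.inl rfl)
  have h₁₂ : (pathGraph m).Adj j₁ j₂ := pathGraph_adj.2 (Or.inl rfl)
  have hleave : ∀ i i' : Fin 2, i ≠ i' → ((Sum.inl i, j₁), (Sum.inr e, j₁)) ∉ B := by
    intro i i' hii' h
    let c : ℕ → (Fin 2 ⊕ (pathGraph 2).edgeSet) × Fin m := fun t =>
      [(Sum.inl i, j₁), (Sum.inl i, j₀), (Sum.inr e, j₀), (Sum.inl i', j₀), (Sum.inl i', j₁),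
        (Sum.inl i', j₂), (Sum.inr e, j₂), (Sum.inl i, j₂), (Sum.inl i, j₁)].getD t
        (Sum.inl i, j₁)
    refine (hB.eq_or_eq_of_mem_of_cycle hd c 7 (fun t ht => ?_) (fun t ht => ?_) rfl h).elim
      (by simp [c]) (by simp [c])
    · interval_cases t
      exacts [qSum_adj_vertical i h₀₁.symm, qSum_adj_spoke (hmem i) j₀,
        (qSum_adj_spoke (hmem i') j₀).symm, qSum_adj_vertical i' h₀₁,
        qSum_adj_vertical i' h₁₂, qSum_adj_spoke (hmem i') j₂,
        (qSum_adj_spoke (hmem i) j₂).symm, qSum_adj_vertical i h₁₂.symm]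
    · interval_cases t <;> simp [c, hii', hii'.symm, j₀, j₂]
  have h₀ := (hB.mem_or_mem (qSum_adj_spoke (hmem 0) j₁)).resolve_left (hleave 0 1 (by decide))
  have h₁ := (hB.mem_or_mem (qSum_adj_spoke (hmem 1) j₁)).resolve_left (hleave 1 0 (by decide))
  exact (two_le_arcOutDeg h₀ h₁ (by simp)).not_gt (hd _)

lemma qSum_pathGraph_exists_two_le_arcOutDeg (hn : 2 ≤ n) (hm : 2 ≤ m)
    (hnm : ¬ (n = 2 ∧ m = 2)) (hB : IsOrientation (qSum (pathGraph n) (pathGraph m)) B) :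
    ∃ v, 2 ≤ arcOutDeg B v := by
  obtain hn | rfl := (by omega : 3 ≤ n ∨ n = 2)
  · exact qSum_pathGraph_exists_two_le_arcOutDeg_of_three_le hn hm hB
  · exact qSum_pathGraph_two_exists_two_le_arcOutDeg (by omega) hB

end LowerBounds

/-- `AT(P_n +_Q P_m) = 2` if `n = 2` and `m = 2`, and `= 3` otherwise. -/
theorem stmt15 (n m : ℕ) (hn : 2 ≤ n) (hm : 2 ≤ m) :
    alonTarsiNumber (qSum (SimpleGraph.pathGraph n) (SimpleGraph.pathGraph m)) =
      if n = 2 ∧ m = 2 then 2 else 3 := by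
  split_ifs with h
  · obtain ⟨rfl, rfl⟩ := h
    have hedge := qSum_adj_vertical (G := SimpleGraph.pathGraph 2) 0
      (SimpleGraph.pathGraph_adj.2 (Or.inl rfl) : (SimpleGraph.pathGraph 2).Adj 0 1)
    exact alonTarsiNumber_eq_succ
      (isOrientation_cyclicOrientation (by norm_num) fun _ _ => sixCycleIndex_adj)
      (isATOrientation_cyclicOrientation (by norm_num))
      (arcOutDeg_cyclicOrientation_le_one sixCycleIndex_injective)
      fun B hB _ => hB.exists_one_le_arcOutDeg hedge
  · exact alonTarsiNumber_eq_succ (isOrientation_rankOrientation qSumRank_injective)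
      isATOrientation_rankOrientation arcOutDeg_rankOrientation_qSumRank_le
      fun B hB _ => qSum_pathGraph_exists_two_le_arcOutDeg hn hm h hB
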